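/- Let G=(V,E) be finite, x,y ∈ V distinct, and ω ∈ {0,1}^E such that x and y are not connected in ω. Then Σ_{σ∈{-1,+1}^V} 1_{{σ_x=σ_y}} Δ(σ,ω) exp(β Σ_{i∈V} h_i σ_i) = 2cosh(h(K_t)+h(K_u)) · Π_{α≠t,u} 2cosh(h(K_α)), where K_t, K_u are the (disjoint) connected components of (V,η(ω)) containing x and y respectively, and h(K) = β Σ_{i∈K} h_i. -/

import Mathlib

open Finset

noncomputable section

variable {V : Type}

/-- The spin value (±1) attached to a Boolean spin (`true ↔ +1`, `false ↔ -1`). -/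
def spin (b : Bool) : ℝ := if b then 1 else -1

/-- The subgraph of `G` whose open edges are the edges in `F`. -/
def openSub (G : SimpleGraph V) (F : Finset (Sym2 V)) : SimpleGraph V where
  Adj i j := G.Adj i j ∧ s(i, j) ∈ F
  symm := by
    constructor
    intro i j h
    exact ⟨h.1.symm, by rw [Sym2.eq_swap]; exact h.2⟩
  loopless := ⟨fun i h => G.irrefl h.1⟩

instance [Fintype V] (H : SimpleGraph V) : Fintype H.ConnectedComponent := by
  classical exact Fintype.ofSurjective H.connectedComponentMk Quot.exists_rep

/-- The vertex set of a connected component, as a `Finset`. -/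
def compSupp [Fintype V] (H : SimpleGraph V) (c : H.ConnectedComponent) : Finset V := by
  classical exact Finset.univ.filter fun v => H.connectedComponentMk v = c

/-- Kronecker delta `δ_{σ_i,σ_j}` of a configuration on an (unordered) edge. -/
def eDelta {S : Type} [DecidableEq S] (σ : V → S) : Sym2 V → ℝ :=
  Sym2.lift ⟨fun i j => if σ i = σ j then 1 else 0, fun _ _ => by simp [eq_comm]⟩

/-- Product of spins `σ_i σ_j` on an (unordered) edge. -/
def eProd (σ : V → Bool) : Sym2 V → ℝ :=
  Sym2.lift ⟨fun i j => spin (σ i) * spin (σ j), fun _ _ => mul_comm _ _⟩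

/-- The consistency indicator `Δ(σ,ω)`: equal to `1` iff `σ` is constant on
every open edge of the configuration `F`. -/
def Delta (G : SimpleGraph V) (F : Finset (Sym2 V)) (σ : V → Bool) : ℝ := by
  classical exact if ∀ i j, G.Adj i j → s(i, j) ∈ F → σ i = σ j then 1 else 0

/-- The Bernoulli factor `B_J(ω) = ∏_{e open} p_e ∏_{e closed} (1-p_e)`. -/
def bern [Fintype V] [DecidableEq V] (G : SimpleGraph V) [DecidableRel G.Adj]
    (p : Sym2 V → ℝ) (F : Finset (Sym2 V)) : ℝ :=
  (∏ e ∈ F, p e) * ∏ e ∈ G.edgeFinset \ F, (1 - p e)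

/-!
`Δ(σ, ω)` forces `σ` to be constant on every open cluster, so the sum runs over spin
assignments to the clusters, and the Gibbs weight factorises over clusters. The constraint
`σ_x = σ_y` only ties together the two distinct clusters of `x` and `y`: summing over their
common spin gives `2 cosh (h(K_t) + h(K_u))`, and every other cluster contributes a free
factor `2 cosh (h(K))`.
-/

theorem SimpleGraph.Reachable.eq_of_forall_adj {α : Type*} {H : SimpleGraph V} {f : V → α}
    (hf : ∀ i j, H.Adj i j → f i = f j) {u v : V} (huv : H.Reachable u v) : f u = f v := by
  obtain ⟨w⟩ := huv
  induction w with
  | nil => rfl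
  | cons hadj _ ih => exact (hf _ _ hadj).trans ih

open scoped Classical in
theorem Delta_eq_ite (G : SimpleGraph V) (F : Finset (Sym2 V)) (σ : V → Bool) :
    Delta G F σ = if σ.FactorsThrough (openSub G F).connectedComponentMk then 1 else 0 := by
  refine if_congr ⟨fun hσ i j hij => ?_, fun hσ i j hadj hmem => ?_⟩ rfl rfl
  · exact (SimpleGraph.ConnectedComponent.eq.mp hij).eq_of_forall_adj (H := openSub G F)
      fun i j hadj => hσ i j hadj.1 hadj.2
  · exact hσ (SimpleGraph.ConnectedComponent.eq.mpr
      (SimpleGraph.Adj.reachable (G := openSub G F) ⟨hadj, hmem⟩))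

open scoped Classical in
theorem Finset.sum_filter_factorsThrough_eq_sum_comp {α β S M : Type*} [Fintype α]
    [DecidableEq α] [Fintype β] [Fintype S] [AddCommMonoid M] {q : α → β} (hq : Function.Surjective q) (f : (α → S) → M) :
    ∑ σ ∈ univ.filter (fun σ : α → S => σ.FactorsThrough q), f σ = ∑ τ : β → S, f (τ ∘ q) := by
  refine sum_nbij' (fun σ => σ ∘ Function.surjInv hq) (fun τ => τ ∘ q) (by simp)
    (fun τ _ => mem_filter.mpr ⟨mem_univ _, fun _ _ h => congrArg τ h⟩) (fun σ hσ => ?_)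
    (fun τ _ => ?_) (fun σ hσ => ?_)
  · have hσ' : σ.FactorsThrough q := (mem_filter.mp hσ).2
    funext i
    exact hσ' (Function.surjInv_eq hq (q i))
  · funext c
    simp [Function.surjInv_eq hq c]
  · have hσ' : σ.FactorsThrough q := (mem_filter.mp hσ).2
    congr 1
    funext i
    exact (hσ' (Function.surjInv_eq hq (q i))).symm

theorem sum_mul_comp_connectedComponentMk [Fintype V] {R : Type*} [CommSemiring R]
    (H : SimpleGraph V) (g : V → R) (w : H.ConnectedComponent → R) :
    ∑ i, g i * w (H.connectedComponentMk i) = ∑ c, (∑ i ∈ compSupp H c, g i) * w c := by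
  classical
  rw [← sum_fiberwise univ H.connectedComponentMk]
  refine sum_congr rfl fun c _ => ?_
  rw [compSupp, sum_mul]
  exact sum_congr rfl fun i hi => by rw [(mem_filter.mp hi).2]

theorem Fintype.sum_prod_ite_eq_mul_prod_compl {ι S R : Type*} [Fintype ι] [DecidableEq ι] [Fintype S]
    [DecidableEq S] [CommSemiring R] (s : Finset ι) (b : ι → S) (f : ι → S → R) :
    ∑ τ : ι → S, (∏ c ∈ s, if τ c = b c then 1 else 0) * ∏ c, f c (τ c)
      = (∏ c ∈ s, f c (b c)) * ∏ c ∈ sᶜ, ∑ a, f c a := by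
  set g : ι → S → R := fun c a => if c ∈ s then (if a = b c then f c a else 0) else f c a
  have hpinned : ∀ τ : ι → S,
      (∏ c ∈ s, if τ c = b c then (1 : R) else 0) * ∏ c, f c (τ c) = ∏ c, g c (τ c) := by
    intro τ
    rw [← prod_mul_prod_compl s (fun c => f c (τ c)), ← mul_assoc, ← prod_mul_distrib,
      ← prod_mul_prod_compl s (fun c => g c (τ c))]
    congr 1
    · exact Finset.prod_congr rfl fun c hc => by simp [g, hc]
    · exact Finset.prod_congr rfl fun c hc => by simp [g, mem_compl.mp hc]
  simp_rw [hpinned, ← Fintype.prod_sum, ← prod_mul_prod_compl s (fun c => ∑ a, g c a)]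
  congr 1
  · exact Finset.prod_congr rfl fun c hc => by simp [g, hc]
  · exact Finset.prod_congr rfl fun c hc => by simp [g, mem_compl.mp hc]

theorem Fintype.sum_ite_eq_mul_prod {ι S R : Type*} [Fintype ι] [DecidableEq ι] [Fintype S]
    [DecidableEq S] [CommSemiring R] {t u : ι} (htu : t ≠ u) (f : ι → S → R) :
    ∑ τ : ι → S, (if τ t = τ u then 1 else 0) * ∏ c, f c (τ c)
      = (∑ a, f t a * f u a) * ∏ c ∈ (univ.erase t).erase u, ∑ a, f c a := by
  have hdiag : ∀ τ : ι → S, (if τ t = τ u then (1 : R) else 0)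
      = ∑ a, ∏ c ∈ {t, u}, if τ c = a then 1 else 0 := by
    intro τ
    simp [prod_pair htu, eq_comm]
  have hcompl : ({t, u} : Finset ι)ᶜ = (univ.erase t).erase u := by
    ext c
    simp [and_comm]
  simp_rw [hdiag, Finset.sum_mul]
  rw [sum_comm]
  refine Finset.sum_congr rfl fun a _ => ?_
  rw [sum_prod_ite_eq_mul_prod_compl {t, u} (fun _ => a) f, prod_pair htu, hcompl]

theorem sum_exp_mul_spin (a : ℝ) : ∑ b : Bool, Real.exp (a * spin b) = 2 * Real.cosh a := by
  rw [Fintype.sum_bool, Real.cosh_eq, spin, spin, if_pos rfl, if_neg Bool.false_ne_true, mul_one,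
    mul_neg_one]
  ring

open scoped Classical in
theorem statement7_general [Fintype V] [DecidableEq V]
    (G : SimpleGraph V)
    (β : ℝ) (h : V → ℝ)
    (x y : V)
    (F : Finset (Sym2 V))
    (hnc : ¬ (openSub G F).Reachable x y) :
    ∑ σ : V → Bool,
        (if σ x = σ y then (1 : ℝ) else 0) * Delta G F σ *
          Real.exp (β * ∑ i, h i * spin (σ i))
      = 2 * Real.cosh
            ((β * ∑ i ∈ compSupp (openSub G F)
                ((openSub G F).connectedComponentMk x), h i)
              + β * ∑ i ∈ compSupp (openSub G F)
                ((openSub G F).connectedComponentMk y), h i) *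
          ∏ c ∈ (Finset.univ.erase
              ((openSub G F).connectedComponentMk x)).erase
              ((openSub G F).connectedComponentMk y),
            2 * Real.cosh (β * ∑ i ∈ compSupp (openSub G F) c, h i) := by
  set H := openSub G F
  set q := H.connectedComponentMk
  set a : H.ConnectedComponent → ℝ := fun c => β * ∑ i ∈ compSupp H c, h i
  have hq : Function.Surjective q := SimpleGraph.ConnectedComponent.ind fun v => ⟨v, rfl⟩
  have hqxy : q x ≠ q y := fun e => hnc (SimpleGraph.ConnectedComponent.eq.mp e)
  have hexp : ∀ τ : H.ConnectedComponent → Bool,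
      Real.exp (β * ∑ i, h i * spin (τ (q i))) = ∏ c, Real.exp (a c * spin (τ c)) := by
    intro τ
    rw [← Real.exp_sum, sum_mul_comp_connectedComponentMk H h (fun c => spin (τ c)), mul_sum]
    simp only [a, mul_assoc]
  calc _ = ∑ σ ∈ univ.filter (fun σ : V → Bool => σ.FactorsThrough q),
          (if σ x = σ y then (1 : ℝ) else 0) * Real.exp (β * ∑ i, h i * spin (σ i)) := by
        rw [sum_filter]
        refine sum_congr rfl fun σ _ => ?_
        rw [Delta_eq_ite]
        split_ifs <;> simp
    _ = ∑ τ : H.ConnectedComponent → Bool,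
          (if τ (q x) = τ (q y) then (1 : ℝ) else 0) * ∏ c, Real.exp (a c * spin (τ c)) := by
        rw [sum_filter_factorsThrough_eq_sum_comp hq]
        simp only [Function.comp_apply, hexp]
    _ = _ := by
        rw [Fintype.sum_ite_eq_mul_prod hqxy fun c b => Real.exp (a c * spin b)]
        simp only [a, ← Real.exp_add, ← add_mul, sum_exp_mul_spin]

open scoped Classical in
/-- Lemma (lema28fev): if `x` and `y` are not connected in `ω`, the sum over
spin configurations with `σ_x = σ_y` factorizes, with the components of `x`
and `y` merging into a single `2cosh(h(K_t)+h(K_u))` factor. -/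
theorem statement7 [Fintype V] [DecidableEq V]
    (G : SimpleGraph V) [DecidableRel G.Adj]
    (β : ℝ) (hβ : 0 < β) (h : V → ℝ)
    (x y : V) (hxy : x ≠ y)
    (F : Finset (Sym2 V)) (hF : F ⊆ G.edgeFinset)
    (hnc : ¬ (openSub G F).Reachable x y) :
    ∑ σ : V → Bool,
        (if σ x = σ y then (1 : ℝ) else 0) * Delta G F σ *
          Real.exp (β * ∑ i, h i * spin (σ i))
      = 2 * Real.cosh
            ((β * ∑ i ∈ compSupp (openSub G F)
                ((openSub G F).connectedComponentMk x), h i)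
              + β * ∑ i ∈ compSupp (openSub G F)
                ((openSub G F).connectedComponentMk y), h i) *
          ∏ c ∈ (Finset.univ.erase
              ((openSub G F).connectedComponentMk x)).erase
              ((openSub G F).connectedComponentMk y),
            2 * Real.cosh (β * ∑ i ∈ compSupp (openSub G F) c, h i) :=
  statement7_general G β h x y F hnc

end
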